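/- arXiv:1910.05777 — 2 statements merged into one kernel-verified Lean document; each statement's English description precedes it below -/
import Mathlib

section
/- Let γ(t) = t + i·y(t), t ∈ [a,b], be a Lipschitz graph with y an L-Lipschitz function. Suppose z₁, …, z_m ∈ ℂ and β₁, …, β_m > 0 with β := β₁ + ⋯ + β_m < 1. Then ∫_a^b ∏_{i=1}^m |γ(t) − z_i|^{-β_i} |γ'(t)| dt ≤ C for a constant C depending only on L, a, b, β. -/
/-!
Since `|γ(t) - z| ≥ |t - Re z|`, each factor is dominated by a one-dimensional singularity, and
the weighted AM-GM inequality with weights `βᵢ / β` bounds the product by the convex combination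
`∑ (βᵢ / β) |t - Re zᵢ| ^ (-β)`. Each term has integral over `[a, b]` bounded independently of
its centre, because `|s| ^ (-β) ≤ 1 + 1_{|s| < 1} |s| ^ (-β)` and `|s| ^ (-β)` is integrable near
`0` for `β < 1`; and `|γ'| ≤ √(1 + L²)` at interior points by the Lipschitz bound. Hence the
constant depends neither on `m` nor on the `zᵢ`.
-/

open MeasureTheory Set Metric Complex Filter
open scoped ENNReal

/-- The point `t + i y(t)` of the graph of `y : ℝ → ℝ`. -/
noncomputable def graphPt (y : ℝ → ℝ) (t : ℝ) : ℂ := (t : ℂ) + (y t : ℂ) * Complex.I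

/-- The arc length element `√(1 + y'(t)²)` of the graph of `y`. -/
noncomputable def arcElt (y : ℝ → ℝ) (t : ℝ) : ℝ := Real.sqrt (1 + deriv y t ^ 2)

open scoped NNReal Topology

namespace Real

theorem prod_rpow_le_sum_div_mul_rpow {ι : Type*} (s : Finset ι) (w u : ι → ℝ)
    (hw : ∀ i ∈ s, 0 ≤ w i) (hu : ∀ i ∈ s, 0 ≤ u i) (hβ : 0 < ∑ i ∈ s, w i) :
    ∏ i ∈ s, u i ^ w i ≤ ∑ i ∈ s, w i / (∑ j ∈ s, w j) * u i ^ ∑ j ∈ s, w j := by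
  set β := ∑ j ∈ s, w j
  calc ∏ i ∈ s, u i ^ w i = ∏ i ∈ s, (u i ^ β) ^ (w i / β) := by
        refine Finset.prod_congr rfl fun i hi => ?_
        rw [← rpow_mul (hu i hi), mul_div_cancel₀ _ hβ.ne']
    _ ≤ _ := geom_mean_le_arith_mean_weighted s _ _ (fun i hi => div_nonneg (hw i hi) hβ.le)
        (by rw [← Finset.sum_div, div_self hβ.ne']) (fun i hi => rpow_nonneg (hu i hi) _)

end Real

theorem abs_sub_re_le_norm_graphPt_sub (y : ℝ → ℝ) (t : ℝ) (z : ℂ) :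
    |t - z.re| ≤ ‖graphPt y t - z‖ := by
  simpa [graphPt] using Complex.abs_re_le_norm (graphPt y t - z)

theorem prod_norm_graphPt_sub_rpow_neg_le {ι : Type*} [Fintype ι] (y : ℝ → ℝ) (t : ℝ)
    (z : ι → ℂ) (w : ι → ℝ) {β : ℝ} (hw : ∀ i, 0 < w i) (hsum : ∑ i, w i = β) (hβ : 0 < β)
    (ht : ∀ i, t ≠ (z i).re) :
    ∏ i, ‖graphPt y t - z i‖ ^ (-w i) ≤ ∑ i, w i / β * |t - (z i).re| ^ (-β) := by
  calc ∏ i, ‖graphPt y t - z i‖ ^ (-w i) ≤ ∏ i, |t - (z i).re|⁻¹ ^ w i := by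
        refine Finset.prod_le_prod (fun i _ => by positivity) fun i _ => ?_
        rw [← Real.rpow_neg_eq_inv_rpow]
        exact Real.rpow_le_rpow_of_nonpos (abs_pos.2 (sub_ne_zero.2 (ht i)))
          (abs_sub_re_le_norm_graphPt_sub y t (z i)) (neg_nonpos.2 (hw i).le)
    _ ≤ ∑ i, w i / β * |t - (z i).re| ^ (-β) := by
        have := Real.prod_rpow_le_sum_div_mul_rpow Finset.univ w (fun i => |t - (z i).re|⁻¹)
          (fun i _ => (hw i).le) (fun i _ => by positivity) (hsum ▸ hβ)
        simpa only [hsum, ← Real.rpow_neg_eq_inv_rpow] using this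

theorem arcElt_le_of_lipschitzOnWith {y : ℝ → ℝ} {K : ℝ≥0} {s : Set ℝ} {t : ℝ}
    (hy : LipschitzOnWith K y s) (hs : s ∈ 𝓝 t) : arcElt y t ≤ √(1 + K ^ 2) := by
  have hderiv : |deriv y t| ≤ K := norm_deriv_le_of_lipschitzOn hs hy
  exact Real.sqrt_le_sqrt (by linarith [sq_le_sq' (abs_le.1 hderiv).1 (abs_le.1 hderiv).2])

theorem ofReal_abs_rpow_neg_le_one_add_indicator {β : ℝ} (hβ : 0 ≤ β) (u : ℝ) :
    ENNReal.ofReal (|u| ^ (-β)) ≤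
      1 + (ball (0 : ℝ) 1).indicator (fun v => ENNReal.ofReal (|v| ^ (-β))) u := by
  by_cases hu : u ∈ ball (0 : ℝ) 1
  · simp only [indicator_of_mem hu]
    exact le_add_self
  · rw [mem_ball_zero_iff, Real.norm_eq_abs, not_lt] at hu
    exact (ENNReal.ofReal_le_one.2 (Real.rpow_le_one_of_one_le_of_nonpos hu (by linarith))).trans
      le_self_add

theorem setLIntegral_abs_sub_rpow_neg_le {β : ℝ} (hβ : 0 ≤ β) (s : Set ℝ) (x : ℝ) :
    ∫⁻ t in s, ENNReal.ofReal (|t - x| ^ (-β)) ≤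
      volume s + ∫⁻ u in ball (0 : ℝ) 1, ENNReal.ofReal (|u| ^ (-β)) := by
  set g := (ball (0 : ℝ) 1).indicator (fun v => ENNReal.ofReal (|v| ^ (-β)))
  calc ∫⁻ t in s, ENNReal.ofReal (|t - x| ^ (-β)) ≤ ∫⁻ t in s, (1 + g (t - x)) :=
        lintegral_mono fun t => ofReal_abs_rpow_neg_le_one_add_indicator hβ (t - x)
    _ = volume s + ∫⁻ t in s, g (t - x) := by
        rw [lintegral_add_left measurable_const, setLIntegral_one]
    _ ≤ volume s + ∫⁻ t, g (t - x) := add_le_add_right (setLIntegral_le_lintegral _ _) _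
    _ = volume s + ∫⁻ u in ball (0 : ℝ) 1, ENNReal.ofReal (|u| ^ (-β)) := by
        rw [lintegral_sub_right_eq_self g x, lintegral_indicator measurableSet_ball]

theorem lintegral_ball_abs_rpow_neg_lt_top {β : ℝ} (hβ : β < 1) :
    ∫⁻ u in ball (0 : ℝ) 1, ENNReal.ofReal (|u| ^ (-β)) < ∞ := by
  refine (integrableOn_ball_of_norm_le_rpow (μ := volume) (C := 1) (α := β) (by simp)
    (by simpa using hβ) (ae_of_all _ fun u => ?_)
    (by fun_prop : Measurable fun u : ℝ => |u| ^ (-β)).aestronglyMeasurable).lintegral_lt_top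
  simp [abs_of_nonneg (Real.rpow_nonneg (abs_nonneg u) _)]

theorem lintegral_le_sum_mul_of_ae_le {α ι : Type*} [MeasurableSpace α] {μ : Measure α}
    (s : Finset ι) {f : α → ℝ≥0∞} {g : ι → α → ℝ≥0∞} (c : ι → ℝ≥0∞) {J : ℝ≥0∞}
    (hg : ∀ i ∈ s, AEMeasurable (g i) μ) (hfg : ∀ᵐ x ∂μ, f x ≤ ∑ i ∈ s, c i * g i x)
    (hJ : ∀ i ∈ s, ∫⁻ x, g i x ∂μ ≤ J) :
    ∫⁻ x, f x ∂μ ≤ (∑ i ∈ s, c i) * J :=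
  calc ∫⁻ x, f x ∂μ ≤ ∫⁻ x, ∑ i ∈ s, c i * g i x ∂μ := lintegral_mono_ae hfg
    _ = ∑ i ∈ s, c i * ∫⁻ x, g i x ∂μ := by
        rw [lintegral_finsetSum' s fun i hi => (hg i hi).const_mul (c i)]
        exact Finset.sum_congr rfl fun i hi => lintegral_const_mul'' (c i) (hg i hi)
    _ ≤ ∑ i ∈ s, c i * J := Finset.sum_le_sum fun i hi => by gcongr; exact hJ i hi
    _ = (∑ i ∈ s, c i) * J := (Finset.sum_mul ..).symm

theorem lipschitz_graph_rpow_product_integral_bound_general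
    (L a b β : ℝ) (hβ0 : 0 < β) (hβ1 : β < 1) :
    ∃ C : ℝ, ∀ (y : ℝ → ℝ), LipschitzOnWith L.toNNReal y (Set.Icc a b) →
      ∀ (m : ℕ) (z : Fin m → ℂ) (βi : Fin m → ℝ),
        (∀ i, 0 < βi i) → (∑ i, βi i) = β →
        (∫⁻ t in Set.Icc a b,
            ENNReal.ofReal
              ((∏ i, Real.rpow ‖graphPt y t - z i‖ (-(βi i))) * arcElt y t))
          ≤ ENNReal.ofReal C := by
  set K := √(1 + (L.toNNReal : ℝ) ^ 2)
  set J := volume (Ioo a b) + ∫⁻ u in ball (0 : ℝ) 1, ENNReal.ofReal (|u| ^ (-β))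
  have hJ : J ≠ ∞ :=
    ENNReal.add_ne_top.2 ⟨measure_Ioo_lt_top.ne, (lintegral_ball_abs_rpow_neg_lt_top hβ1).ne⟩
  refine ⟨K * J.toReal, fun y hy m z w hw hsum => ?_⟩
  have hc : ∀ i, 0 ≤ K * (w i / β) := fun i => by have := hw i; positivity
  have hbound : ∀ᵐ t ∂volume.restrict (Ioo a b),
      ENNReal.ofReal ((∏ i, Real.rpow ‖graphPt y t - z i‖ (-(w i))) * arcElt y t) ≤
        ∑ i, ENNReal.ofReal (K * (w i / β)) * ENNReal.ofReal (|t - (z i).re| ^ (-β)) := by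
    -- At `t = Re zᵢ` the bound fails: Lean's junk value `0 ^ (-β) = 0` kills the `i`-th term.
    filter_upwards [ae_restrict_mem measurableSet_Ioo,
      ae_restrict_of_ae ((countable_range fun i => (z i).re).ae_notMem volume)] with t ht htz
    have hprod := prod_norm_graphPt_sub_rpow_neg_le y t z w hw hsum hβ0
      fun i h => htz ⟨i, h.symm⟩
    have harc := arcElt_le_of_lipschitzOnWith hy (Icc_mem_nhds ht.1 ht.2)
    simp_rw [← ENNReal.ofReal_mul (hc _), ← ENNReal.ofReal_sum_of_nonneg fun i _ =>
      mul_nonneg (hc i) (Real.rpow_nonneg (abs_nonneg _) _), mul_assoc, ← Finset.mul_sum]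
    refine ENNReal.ofReal_le_ofReal ?_
    rw [mul_comm K]
    exact mul_le_mul hprod harc (Real.sqrt_nonneg _) (le_trans (by positivity) hprod)
  rw [← setLIntegral_congr Ioo_ae_eq_Icc]
  calc _ ≤ (∑ i, ENNReal.ofReal (K * (w i / β))) * J :=
        lintegral_le_sum_mul_of_ae_le _ _ (fun i _ => by fun_prop) hbound
          fun i _ => setLIntegral_abs_sub_rpow_neg_le hβ0.le _ _
    _ = ENNReal.ofReal (K * J.toReal) := by
        rw [← ENNReal.ofReal_sum_of_nonneg fun i _ => hc i, ← Finset.mul_sum, ← Finset.sum_div,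
          hsum, div_self hβ0.ne', mul_one, ENNReal.ofReal_mul (Real.sqrt_nonneg _),
          ENNReal.ofReal_toReal hJ]

/-- Product version: if `β₁, …, β_m > 0` and `β₁ + ⋯ + β_m = β < 1`, then
`∫_a^b ∏_i |γ(t) - z_i|^{-β_i} |γ'(t)| dt ≤ C` for a constant `C` depending only on
`L, a, b, β`. -/
theorem lipschitz_graph_rpow_product_integral_bound
    (L a b β : ℝ) (hab : a ≤ b) (hL : 0 ≤ L) (hβ0 : 0 < β) (hβ1 : β < 1) :
    ∃ C : ℝ, ∀ (y : ℝ → ℝ), LipschitzOnWith L.toNNReal y (Set.Icc a b) →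
      ∀ (m : ℕ) (z : Fin m → ℂ) (βi : Fin m → ℝ),
        (∀ i, 0 < βi i) → (∑ i, βi i) = β →
        (∫⁻ t in Set.Icc a b,
            ENNReal.ofReal
              ((∏ i, Real.rpow ‖graphPt y t - z i‖ (-(βi i))) * arcElt y t))
          ≤ ENNReal.ofReal C :=
  lipschitz_graph_rpow_product_integral_bound_general L a b β hβ0 hβ1
end

section
/- Let Ω ⊂ ℂ be a Carathéodory domain and φ a subharmonic function on ℂ. Suppose P is a polynomial with ∫_Ω |P|² e^{-φ} dλ < ∞. Let p ∈ ∂Ω and suppose there is an open disc Δ contained in the complement of Ω with p ∈ ∂Δ. Then for every ε > 0 there exists a function P̃, holomorphic on a neighborhood of the closure of Ω, with P̃(p) = 0 and ∫_Ω |P̃ − P|² e^{-φ} dλ < ε. -/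
/-!
Write `Δ = D(q, r)`. The Möbius map `t z = (p - q) / (z - q)` is holomorphic off `q`, equals `1`
at `p`, and has modulus `< 1` on `Ω`, since the open set `Ω` misses the closed disc `closure Δ`.
Hence `P (1 - tⁿ)` is holomorphic near `closure Ω` and vanishes at `p`, while its error
`|P tⁿ|² e^{-φ}` tends to `0` pointwise on `Ω` under the integrable majorant `|P|² e^{-φ}`;
dominated convergence makes the error small for large `n`.
-/

open MeasureTheory Set Metric Complex Filter
open scoped ENNReal Topology

/-- A real-valued function is *subharmonic* on an open set `U ⊆ ℂ` if it is upper
semicontinuous on `U` and satisfies the sub-mean value inequality on every closed disc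
contained in `U`. -/
def SubharmonicOn (φ : ℂ → ℝ) (U : Set ℂ) : Prop :=
  UpperSemicontinuousOn φ U ∧
    ∀ z ∈ U, ∀ r : ℝ, 0 < r → Metric.closedBall z r ⊆ U →
      φ z ≤ (1 / (2 * Real.pi)) *
        ∫ θ in (0 : ℝ)..(2 * Real.pi), φ (z + (r : ℂ) * Complex.exp ((θ : ℂ) * Complex.I))

/-- A *Carathéodory domain*: a bounded simply-connected planar domain whose boundary is
also the boundary of an unbounded domain. -/
def CaratheodoryDomain (Ω : Set ℂ) : Prop :=
  IsOpen Ω ∧ IsConnected Ω ∧ Bornology.IsBounded Ω ∧ SimplyConnectedSpace ↥Ω ∧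
    ∃ V : Set ℂ, IsOpen V ∧ IsConnected V ∧ ¬Bornology.IsBounded V ∧ frontier Ω = frontier V

/-- The weighted squared `L²` norm `∫_Ω |f|² e^{-φ} dλ` with respect to planar
Lebesgue measure. -/
noncomputable def wArea (Ω : Set ℂ) (φ : ℂ → ℝ) (f : ℂ → ℂ) : ℝ≥0∞ :=
  ∫⁻ z in Ω, ENNReal.ofReal (‖f z‖ ^ 2 * Real.exp (-φ z))

theorem tendsto_lintegral_mul_pow_of_lt_one {α : Type*} [MeasurableSpace α] {μ : Measure α}
    {f s : α → ℝ≥0∞} (hf : AEMeasurable f μ) (hf_fin : ∫⁻ a, f a ∂μ ≠ ∞)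
    (hs : AEMeasurable s μ) (hs_lt : ∀ᵐ a ∂μ, s a < 1) :
    Tendsto (fun n : ℕ => ∫⁻ a, f a * s a ^ n ∂μ) atTop (𝓝 0) := by
  have hlim : ∀ᵐ a ∂μ, Tendsto (fun n : ℕ => f a * s a ^ n) atTop (𝓝 0) := by
    filter_upwards [hs_lt, ae_lt_top' hf hf_fin] with a has haf
    simpa using ENNReal.Tendsto.const_mul (ENNReal.tendsto_pow_atTop_nhds_zero_of_lt_one has)
      (Or.inr haf.ne)
  have hbound : ∀ n : ℕ, (fun a => f a * s a ^ n) ≤ᵐ[μ] f := fun n => by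
    filter_upwards [hs_lt] with a has
    exact mul_le_of_le_one_right' (pow_le_one₀ bot_le has.le)
  simpa using tendsto_lintegral_of_dominated_convergence' f
    (fun n => hf.mul (hs.pow_const n)) hbound hf_fin hlim

theorem closedBall_subset_compl_of_isOpen {E : Type*} [NormedAddCommGroup E] [NormedSpace ℝ E]
    {U : Set E} {x : E} {r : ℝ} (hU : IsOpen U) (hr : r ≠ 0) (h : ball x r ⊆ Uᶜ) :
    closedBall x r ⊆ Uᶜ :=
  closure_ball x hr ▸ closure_minimal h hU.isClosed_compl

theorem norm_div_sub_lt_one {𝕜 : Type*} [NormedField 𝕜] {p q z : 𝕜} (h : ‖p - q‖ < ‖z - q‖) :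
    ‖(p - q) / (z - q)‖ < 1 := by
  rw [norm_div, div_lt_one ((norm_nonneg _).trans_lt h)]
  exact h

theorem SubharmonicOn.measurable_of_univ {φ : ℂ → ℝ} (hφ : SubharmonicOn φ univ) :
    Measurable φ :=
  (upperSemicontinuousOn_univ_iff.mp hφ.1).measurable

theorem wArea_neg (Ω : Set ℂ) (φ : ℂ → ℝ) (f : ℂ → ℂ) :
    wArea Ω φ (fun z => -f z) = wArea Ω φ f := by
  simp only [wArea, norm_neg]

theorem wArea_mul_pow (Ω : Set ℂ) (φ : ℂ → ℝ) (f t : ℂ → ℂ) (n : ℕ) :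
    wArea Ω φ (fun z => f z * t z ^ n) =
      ∫⁻ z in Ω, ENNReal.ofReal (‖f z‖ ^ 2 * Real.exp (-φ z)) * ENNReal.ofReal (‖t z‖ ^ 2) ^ n := by
  refine lintegral_congr fun z => ?_
  rw [← ENNReal.ofReal_pow (by positivity), ← ENNReal.ofReal_mul (by positivity), norm_mul,
    norm_pow]
  ring_nf

theorem tendsto_wArea_mul_pow {Ω : Set ℂ} {φ : ℂ → ℝ} {f t : ℂ → ℂ} (hΩ : MeasurableSet Ω)
    (hφ : Measurable φ) (hf : Measurable f) (hf_fin : wArea Ω φ f ≠ ∞) (ht : Measurable t)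
    (ht_lt : ∀ z ∈ Ω, ‖t z‖ < 1) :
    Tendsto (fun n : ℕ => wArea Ω φ (fun z => f z * t z ^ n)) atTop (𝓝 0) := by
  simp only [wArea_mul_pow]
  refine tendsto_lintegral_mul_pow_of_lt_one (by fun_prop) hf_fin (by fun_prop) ?_
  refine ae_restrict_of_forall_mem hΩ fun z hz => ?_
  rw [ENNReal.ofReal_lt_one]
  exact pow_lt_one₀ (norm_nonneg _) (ht_lt z hz) two_ne_zero

theorem approximate_by_holomorphic_vanishing_at_peak_point_general
    (Ω : Set ℂ) (hΩ : CaratheodoryDomain Ω)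
    (φ : ℂ → ℝ) (hφ : SubharmonicOn φ Set.univ)
    (P : Polynomial ℂ) (hP : wArea Ω φ (fun z => P.eval z) < ⊤)
    (p : ℂ)
    (q : ℂ) (r : ℝ) (hΔ : Metric.ball q r ⊆ Ωᶜ)
    (hpΔ : p ∈ frontier (Metric.ball q r)) :
    ∀ ε : ℝ, 0 < ε → ∃ (W : Set ℂ) (Pt : ℂ → ℂ),
      IsOpen W ∧ closure Ω ⊆ W ∧ DifferentiableOn ℂ Pt W ∧ Pt p = 0 ∧
      wArea Ω φ (fun z => Pt z - P.eval z) < ENNReal.ofReal ε := by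
  intro ε hε
  have hr : 0 < r := by
    by_contra! h
    simp [ball_eq_empty.2 h] at hpΔ
  have hpq : ‖p - q‖ = r := by simpa [dist_eq_norm] using frontier_ball_subset_sphere hpΔ
  set t : ℂ → ℂ := fun z => (p - q) / (z - q)
  have hΩ_out : Ω ⊆ (closedBall q r)ᶜ :=
    subset_compl_comm.1 (closedBall_subset_compl_of_isOpen hΩ.1 hr.ne' hΔ)
  have ht_lt : ∀ z ∈ Ω, ‖t z‖ < 1 := fun z hz =>
    norm_div_sub_lt_one (by simpa [hpq, dist_eq_norm] using hΩ_out hz)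
  obtain ⟨n, hn⟩ := ((tendsto_wArea_mul_pow hΩ.1.measurableSet hφ.measurable_of_univ
    P.continuous.measurable hP.ne (by fun_prop) ht_lt).eventually
    (gt_mem_nhds (ENNReal.ofReal_pos.2 hε))).exists
  refine ⟨{q}ᶜ, fun z => P.eval z - P.eval z * t z ^ n, isOpen_compl_singleton, ?_, ?_, ?_, ?_⟩
  · have hq : q ∉ closure Ω := fun hq =>
      closure_minimal (subset_compl_comm.1 hΔ) isOpen_ball.isClosed_compl hq (mem_ball_self hr)
    exact fun z hz hzq => hq (hzq ▸ hz)
  · exact P.differentiable.differentiableOn.sub (P.differentiable.differentiableOn.mul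
      (((differentiableOn_const _).div (differentiable_id.sub_const q).differentiableOn
        fun z hz => sub_ne_zero.2 hz).pow n))
  · have hpq0 : p - q ≠ 0 := by rw [← norm_ne_zero_iff, hpq]; exact hr.ne'
    simp [t, div_self hpq0]
  · simpa only [sub_sub_cancel_left, wArea_neg] using hn

/-- Let `Ω` be a Carathéodory domain, `φ` subharmonic on `ℂ`, and `P` a polynomial with
`∫_Ω |P|² e^{-φ} dλ < ∞`. If `p ∈ ∂Ω` and there is an open disc `Δ ⊆ Ωᶜ` with
`p ∈ ∂Δ`, then `P` can be approximated in `L²(Ω, φ)` by functions holomorphic on a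
neighborhood of the closure of `Ω` vanishing at `p`. -/
theorem approximate_by_holomorphic_vanishing_at_peak_point
    (Ω : Set ℂ) (hΩ : CaratheodoryDomain Ω)
    (φ : ℂ → ℝ) (hφ : SubharmonicOn φ Set.univ)
    (P : Polynomial ℂ) (hP : wArea Ω φ (fun z => P.eval z) < ⊤)
    (p : ℂ) (hp : p ∈ frontier Ω)
    (q : ℂ) (r : ℝ) (hr : 0 < r) (hΔ : Metric.ball q r ⊆ Ωᶜ)
    (hpΔ : p ∈ frontier (Metric.ball q r)) :
    ∀ ε : ℝ, 0 < ε → ∃ (W : Set ℂ) (Pt : ℂ → ℂ),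
      IsOpen W ∧ closure Ω ⊆ W ∧ DifferentiableOn ℂ Pt W ∧ Pt p = 0 ∧
      wArea Ω φ (fun z => Pt z - P.eval z) < ENNReal.ofReal ε :=
  approximate_by_holomorphic_vanishing_at_peak_point_general Ω hΩ φ hφ P hP p q r hΔ hpΔ
end
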